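/- Let f be the solution of the modified Boltzmann system (f'_t(0) = (1/2)∑_{ε≥1}f_t(ε)², f'_t(ε) = -f_t(ε)² for odd ε, f'_t(ε) = (1/2)f_t(ε/2)² - f_t(ε)² for even ε ≥ 2) with probability initial datum m of finite energy e = ∑ ε m(ε). Then the energy is conserved: ∑_{ε≥1} ε f_t(ε) = e for all t ≥ 0. -/

import Mathlib

/-!
Each `f_t(ε)` satisfies `f' ≥ -f²` and so stays nonnegative. Along the flow the partial energy
`∑_{ε<n} ε f_t(ε)` has derivative `-∑_{n/2 ≤ ε < n} ε f_t(ε)²`: the gain of `f(2k)` is exactly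
the loss of `f(k)`, so only the terms whose doubled energy leaves the window survive. Hence the
partial energies decrease, so they stay below `e`, which gives `f_t(ε) ≤ e/ε` and bounds the
defect by `e²/(n/2)` per unit time. Letting `n → ∞` squeezes the total energy at time `t` to `e`.
-/

/-- Right-hand side of the modified discrete Boltzmann system. -/
noncomputable def mbRHS (g : ℕ → ℝ) (ε : ℕ) : ℝ :=
  if ε = 0 then (1 / 2) * ∑' n : ℕ, (g (n + 1)) ^ 2
  else if Odd ε then -(g ε) ^ 2
  else (1 / 2) * (g (ε / 2)) ^ 2 - (g ε) ^ 2

/-- `f` solves the modified Boltzmann system on `[0, ∞)`. -/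
def SolvesMBE (f : ℝ → ℕ → ℝ) : Prop :=
  ∀ t : ℝ, 0 ≤ t → ∀ ε : ℕ, HasDerivAt (fun s => f s ε) (mbRHS (f t) ε) t

open Finset Filter

lemma monotoneOn_Ici_of_hasDerivAt_nonneg {φ φ' : ℝ → ℝ} {a : ℝ}
    (hφ : ∀ t, a ≤ t → HasDerivAt φ (φ' t) t) (hφ' : ∀ t, a < t → 0 ≤ φ' t) :
    MonotoneOn φ (Set.Ici a) :=
  monotoneOn_of_hasDerivWithinAt_nonneg (convex_Ici a)
    (fun t ht => (hφ t ht).continuousAt.continuousWithinAt)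
    (fun t ht => (hφ t (interior_subset ht)).hasDerivWithinAt)
    (fun t ht => hφ' t (by rwa [interior_Ici] at ht))

lemma nonneg_of_hasDerivAt_ge_neg_sq {φ φ' : ℝ → ℝ}
    (hφ : ∀ t, 0 ≤ t → HasDerivAt φ (φ' t) t) (hφ' : ∀ t, 0 < t → -φ t ^ 2 ≤ φ' t)
    (h0 : 0 ≤ φ 0) {t : ℝ} (ht : 0 ≤ t) : 0 ≤ φ t := by
  -- integrating factor `exp (∫₀ᵗ φ)`, with `φ` extended continuously to `t < 0`
  set ψ : ℝ → ℝ := fun s => φ (max s 0)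
  have hψ : Continuous ψ := continuous_iff_continuousAt.2 fun s =>
    (hφ _ (le_max_right s 0)).continuousAt.comp (f := fun r : ℝ => max r 0)
      (continuous_id.max continuous_const).continuousAt
  set F : ℝ → ℝ := fun s => ∫ r in (0 : ℝ)..s, ψ r
  have hF : ∀ s, HasDerivAt F (ψ s) s := fun s =>
    intervalIntegral.integral_hasDerivAt_right (hψ.intervalIntegrable 0 s)
      (hψ.stronglyMeasurableAtFilter _ _) hψ.continuousAt
  have hG : ∀ s, 0 ≤ s →
      HasDerivAt (fun r => φ r * Real.exp (F r)) ((φ' s + φ s ^ 2) * Real.exp (F s)) s := by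
    intro s hs
    refine ((hφ s hs).mul (hF s).exp).congr_deriv ?_
    rw [show ψ s = φ s from congrArg φ (max_eq_left hs)]
    ring
  have hmono := monotoneOn_Ici_of_hasDerivAt_nonneg hG fun s hs =>
    mul_nonneg (by linarith [hφ' s hs]) (Real.exp_pos _).le
  have h := hmono Set.self_mem_Ici ht ht
  simp only [F, intervalIntegral.integral_same, Real.exp_zero, mul_one] at h
  exact nonneg_of_mul_nonneg_left (h0.trans h) (Real.exp_pos _)

lemma mbRHS_of_odd (g : ℕ → ℝ) {ε : ℕ} (hε : Odd ε) : mbRHS g ε = -g ε ^ 2 := by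
  rw [mbRHS, if_neg (by rintro rfl; simp at hε), if_pos hε]

lemma mbRHS_two_mul (g : ℕ → ℝ) {k : ℕ} (hk : k ≠ 0) :
    mbRHS g (2 * k) = 1 / 2 * g k ^ 2 - g (2 * k) ^ 2 := by
  rw [mbRHS, if_neg (by omega), if_neg (by simp), Nat.mul_div_cancel_left k two_pos]

lemma sum_range_mul_mbRHS_eq_sub (g : ℕ → ℝ) (n : ℕ) :
    ∑ ε ∈ range n, (ε : ℝ) * mbRHS g ε =
      ∑ k ∈ range ((n + 1) / 2), (k : ℝ) * g k ^ 2 -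
        ∑ ε ∈ range n, (ε : ℝ) * g ε ^ 2 := by
  induction n with
  | zero => simp
  | succ n ih =>
    rw [sum_range_succ, ih, sum_range_succ (fun ε : ℕ => (ε : ℝ) * g ε ^ 2)]
    obtain ⟨k, rfl | rfl⟩ := Nat.even_or_odd' n
    · rw [show (2 * k + 1 + 1) / 2 = (2 * k + 1) / 2 + 1 by omega, sum_range_succ,
        show (2 * k + 1) / 2 = k by omega]
      rcases eq_or_ne k 0 with rfl | hk
      · simp
      · rw [mbRHS_two_mul g hk]
        push_cast
        ring
    · rw [show (2 * k + 1 + 1 + 1) / 2 = (2 * k + 1 + 1) / 2 by omega,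
        mbRHS_of_odd g (odd_two_mul_add_one k)]
      ring

lemma sum_range_mul_mbRHS (g : ℕ → ℝ) (n : ℕ) :
    ∑ ε ∈ range n, (ε : ℝ) * mbRHS g ε =
      -∑ ε ∈ Ico ((n + 1) / 2) n, (ε : ℝ) * g ε ^ 2 := by
  rw [sum_range_mul_mbRHS_eq_sub, sum_Ico_eq_sub _ (by omega)]
  ring

section EnergyBounds

variable {g : ℕ → ℝ} {E : ℝ}

lemma mul_le_of_forall_sum_range_le (hg : ∀ ε, 0 ≤ g ε)
    (hE : ∀ n, ∑ ε ∈ range n, (ε : ℝ) * g ε ≤ E) (ε : ℕ) :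
    (ε : ℝ) * g ε ≤ E :=
  (single_le_sum (fun i _ => mul_nonneg i.cast_nonneg (hg i))
    (self_mem_range_succ ε)).trans (hE (ε + 1))

lemma sum_Ico_mul_sq_le (hg : ∀ ε, 0 ≤ g ε)
    (hE : ∀ n, ∑ ε ∈ range n, (ε : ℝ) * g ε ≤ E) {M : ℕ} (hM : 0 < M) (n : ℕ) :
    ∑ ε ∈ Ico M n, (ε : ℝ) * g ε ^ 2 ≤ E ^ 2 / M := by
  have hM' : (0 : ℝ) < M := by exact_mod_cast hM
  have hE0 : 0 ≤ E := by simpa using hE 0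
  have hgM : ∀ ε ∈ Ico M n, g ε ≤ E / M := by
    intro ε hε
    have hMε : (M : ℝ) ≤ ε := by exact_mod_cast (mem_Ico.1 hε).1
    rw [le_div_iff₀ hM']
    nlinarith [mul_le_of_forall_sum_range_le hg hE ε, hg ε]
  calc ∑ ε ∈ Ico M n, (ε : ℝ) * g ε ^ 2
      ≤ ∑ ε ∈ Ico M n, E / M * ((ε : ℝ) * g ε) := sum_le_sum fun ε hε => by
        rw [sq, ← mul_assoc, mul_comm (E / M)]
        exact mul_le_mul_of_nonneg_left (hgM ε hε) (mul_nonneg ε.cast_nonneg (hg ε))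
    _ = E / M * ∑ ε ∈ Ico M n, (ε : ℝ) * g ε := (mul_sum _ _ _).symm
    _ ≤ E / M * E := by
        refine mul_le_mul_of_nonneg_left
          ((sum_le_sum_of_subset_of_nonneg ?_ ?_).trans (hE n)) (by positivity)
        · exact fun ε hε => mem_range.2 (mem_Ico.1 hε).2
        · exact fun ε _ _ => mul_nonneg ε.cast_nonneg (hg ε)
    _ = E ^ 2 / M := by ring

end EnergyBounds

namespace SolvesMBE

variable {f : ℝ → ℕ → ℝ}

lemma nonneg (hf : SolvesMBE f) (h0 : ∀ ε, 0 ≤ f 0 ε) {t : ℝ} (ht : 0 ≤ t) (ε : ℕ) :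
    0 ≤ f t ε := by
  refine nonneg_of_hasDerivAt_ge_neg_sq (fun s hs => hf s hs ε) (fun s _ => ?_) (h0 ε) ht
  unfold mbRHS
  split_ifs
  · have : 0 ≤ ∑' n : ℕ, f s (n + 1) ^ 2 := tsum_nonneg fun n => sq_nonneg _
    nlinarith
  · exact le_rfl
  · nlinarith [sq_nonneg (f s (ε / 2))]

lemma hasDerivAt_sum_range (hf : SolvesMBE f) {t : ℝ} (ht : 0 ≤ t) (n : ℕ) :
    HasDerivAt (fun s => ∑ ε ∈ range n, (ε : ℝ) * f s ε)
      (-∑ ε ∈ Ico ((n + 1) / 2) n, (ε : ℝ) * f t ε ^ 2) t := by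
  rw [← sum_range_mul_mbRHS]
  exact HasDerivAt.fun_sum fun ε _ => (hf t ht ε).const_mul _

lemma sum_range_le_sum_range_zero (hf : SolvesMBE f) {t : ℝ} (ht : 0 ≤ t) (n : ℕ) :
    ∑ ε ∈ range n, (ε : ℝ) * f t ε ≤ ∑ ε ∈ range n, (ε : ℝ) * f 0 ε := by
  have hmono := monotoneOn_Ici_of_hasDerivAt_nonneg
    (fun s hs => (hf.hasDerivAt_sum_range hs n).neg) fun s _ => by
      simpa only [neg_neg] using
        sum_nonneg fun ε _ => mul_nonneg ε.cast_nonneg (sq_nonneg (f s ε))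
  simpa using hmono Set.self_mem_Ici ht ht

lemma sum_range_le_tsum_zero (hf : SolvesMBE f) (h0 : ∀ ε, 0 ≤ f 0 ε)
    (hsum0 : Summable fun ε : ℕ => (ε : ℝ) * f 0 ε) {t : ℝ} (ht : 0 ≤ t) (n : ℕ) :
    ∑ ε ∈ range n, (ε : ℝ) * f t ε ≤ ∑' ε : ℕ, (ε : ℝ) * f 0 ε :=
  (hf.sum_range_le_sum_range_zero ht n).trans
    (hsum0.sum_le_tsum _ fun ε _ => mul_nonneg ε.cast_nonneg (h0 ε))

lemma sum_range_zero_sub_le_sum_range (hf : SolvesMBE f) (h0 : ∀ ε, 0 ≤ f 0 ε)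
    (hsum0 : Summable fun ε : ℕ => (ε : ℝ) * f 0 ε) {t : ℝ} (ht : 0 ≤ t) {n : ℕ}
    (hn : 0 < n) :
    ∑ ε ∈ range n, (ε : ℝ) * f 0 ε -
        t * ((∑' ε : ℕ, (ε : ℝ) * f 0 ε) ^ 2 / ((n + 1) / 2 : ℕ)) ≤
      ∑ ε ∈ range n, (ε : ℝ) * f t ε := by
  set c := (∑' ε : ℕ, (ε : ℝ) * f 0 ε) ^ 2 / ((n + 1) / 2 : ℕ)
  have hmono := monotoneOn_Ici_of_hasDerivAt_nonneg
    (fun s hs => (hf.hasDerivAt_sum_range hs n).add (hasDerivAt_mul_const c))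
    fun s hs => by
      linarith [sum_Ico_mul_sq_le (hf.nonneg h0 hs.le)
        (hf.sum_range_le_tsum_zero h0 hsum0 hs.le) (M := (n + 1) / 2) (by omega) n]
  simpa [sub_le_iff_le_add] using hmono Set.self_mem_Ici ht ht

end SolvesMBE

theorem mbe_energy_conservation_general (f : ℝ → ℕ → ℝ) (e : ℝ)
    (hf : SolvesMBE f)
    (hpos0 : ∀ ε : ℕ, 0 ≤ f 0 ε)
    (hsum0 : Summable (fun ε : ℕ => (ε : ℝ) * f 0 ε))
    (he : ∑' ε : ℕ, (ε : ℝ) * f 0 ε = e) :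
    ∀ t : ℝ, 0 ≤ t → ∑' ε : ℕ, (ε : ℝ) * f t ε = e := by
  intro t ht
  subst he
  have hle := hf.sum_range_le_tsum_zero hpos0 hsum0 ht
  have hsum : Summable fun ε : ℕ => (ε : ℝ) * f t ε :=
    summable_of_sum_range_le (fun ε => mul_nonneg ε.cast_nonneg (hf.nonneg hpos0 ht ε)) hle
  refine le_antisymm (hsum.tsum_le_of_sum_range_le hle) ?_
  have hwindow : Tendsto (fun n : ℕ => (((n + 1) / 2 : ℕ) : ℝ)) atTop atTop :=
    tendsto_natCast_atTop_atTop.comp <|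
      tendsto_atTop_atTop.2 fun b => ⟨2 * b, fun n hn => by omega⟩
  have hdefect : Tendsto
      (fun n : ℕ => t * ((∑' ε : ℕ, (ε : ℝ) * f 0 ε) ^ 2 / ((n + 1) / 2 : ℕ)))
      atTop (nhds 0) := by
    simpa using (tendsto_const_nhds.div_atTop hwindow).const_mul t
  refine le_of_tendsto_of_tendsto (by simpa using hsum0.hasSum.tendsto_sum_nat.sub hdefect)
    hsum.hasSum.tendsto_sum_nat ?_
  filter_upwards [eventually_gt_atTop 0] with n hn
    using hf.sum_range_zero_sub_le_sum_range hpos0 hsum0 ht hn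

/-- Energy conservation for the modified Boltzmann system with a probability
initial datum of finite energy `e`: `∑ ε ε·f t ε = e` for all `t ≥ 0`. -/
theorem mbe_energy_conservation (f : ℝ → ℕ → ℝ) (e : ℝ)
    (hf : SolvesMBE f)
    (hpos0 : ∀ ε : ℕ, 0 ≤ f 0 ε)
    (hprob0 : ∑' ε : ℕ, f 0 ε = 1)
    (hsum0 : Summable (fun ε : ℕ => (ε : ℝ) * f 0 ε))
    (he : ∑' ε : ℕ, (ε : ℝ) * f 0 ε = e) :
    ∀ t : ℝ, 0 ≤ t → ∑' ε : ℕ, (ε : ℝ) * f t ε = e :=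
  mbe_energy_conservation_general f e hf hpos0 hsum0 he
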